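/- Let X with E|X|^p < ∞ for some 0 < p < 2 and r > p. Then ∑_{k=1}^∞ (Log k)^r / k^{r/p} · E[|X|^r · 1{|X|^r ≤ k^{r/p} / (Log k)^{r²/(r-p)}}] ≤ C(p,r) E|X|^p for some constant C(p,r) depending only on p and r. -/

import Mathlib

open MeasureTheory Filter

noncomputable def Log (x : ℝ) : ℝ := Real.log (max x (Real.exp 1))

/-!
Fix `x = |X ω| ≥ 0` and let `F k = (Log k) ^ r * k ^ (1 - r / p)` (`logTail`). The truncation
condition of the `k`-th term is equivalent to `x ^ r * F k ≤ x ^ p`, and its weight is `F k / k`,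
so every term is at most `x ^ p`. For large `k` the mean value theorem applied to
`u ↦ (log u) ^ r * u ^ (1 - r / p)` gives `weight k ≲ F k - F (k + 1)`, so the terms with large `k`
telescope against the antitone sequence `min (x ^ r * F k) (x ^ p)` and sum to `≲ x ^ p`.
Integrating this pointwise bound by monotone convergence gives the theorem.
-/

open Finset

noncomputable def logWeight (p r : ℝ) (k : ℕ) : ℝ := Log k ^ r / (k : ℝ) ^ (r / p)

noncomputable def truncLevel (p r : ℝ) (k : ℕ) : ℝ := (k : ℝ) ^ (r / p) / Log k ^ (r ^ 2 / (r - p))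

noncomputable def logTail (p r : ℝ) (k : ℕ) : ℝ := Log k ^ r * (k : ℝ) ^ (1 - r / p)

noncomputable def truncTerm (p r x : ℝ) (k : ℕ) : ℝ :=
  if x ^ r ≤ truncLevel p r k then logWeight p r k * x ^ r else 0

lemma one_le_Log (x : ℝ) : 1 ≤ Log x :=
  (Real.log_exp 1).symm.trans_le (Real.log_le_log (Real.exp_pos 1) (le_max_right x _))

lemma Log_pos (x : ℝ) : 0 < Log x := one_pos.trans_le (one_le_Log x)

lemma Log_of_exp_one_le {x : ℝ} (hx : Real.exp 1 ≤ x) : Log x = Real.log x := by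
  rw [Log, max_eq_left hx]

lemma logWeight_nonneg (p r : ℝ) (k : ℕ) : 0 ≤ logWeight p r k := by
  have := Log_pos k
  unfold logWeight
  positivity

lemma logTail_nonneg (p r : ℝ) (k : ℕ) : 0 ≤ logTail p r k := by
  have := Log_pos k
  unfold logTail
  positivity

lemma truncTerm_nonneg (p r : ℝ) (k : ℕ) {x : ℝ} (hx : 0 ≤ x) : 0 ≤ truncTerm p r x k := by
  have := logWeight_nonneg p r k
  rw [truncTerm]
  split_ifs <;> positivity

section Truncation

variable {p r : ℝ} (hp : 0 < p) (hr : p < r)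
include hp hr

lemma rpow_mul_logTail_le_of_le_truncLevel (k : ℕ) {x : ℝ} (hx : 0 ≤ x)
    (hxk : x ^ r ≤ truncLevel p r k) : x ^ r * logTail p r k ≤ x ^ p := by
  have hs : 1 < r / p := (one_lt_div hp).mpr hr
  rcases Nat.eq_zero_or_pos k with rfl | hk
  · simp [logTail, Real.zero_rpow (by linarith : 1 - r / p ≠ 0), Real.rpow_nonneg hx]
  have hk0 : (0 : ℝ) < k := Nat.cast_pos.mpr hk
  have hL := Log_pos k
  have hrp : 0 < r - p := sub_pos.mpr hr
  have hr0 : r ≠ 0 := (hp.trans hr).ne'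
  have hpow : x ^ (r - p) ≤ (k : ℝ) ^ ((r - p) / p) / Log k ^ r := by
    have := Real.rpow_le_rpow (by positivity) hxk (div_pos hrp (hp.trans hr)).le
    rwa [truncLevel, Real.div_rpow (by positivity) (by positivity), ← Real.rpow_mul hx,
      ← Real.rpow_mul hk0.le, ← Real.rpow_mul hL.le, show r * ((r - p) / r) = r - p by field_simp,
      show r / p * ((r - p) / r) = (r - p) / p by field_simp,
      show r ^ 2 / (r - p) * ((r - p) / r) = r by field_simp] at this
  have hsplit : x ^ r = x ^ p * x ^ (r - p) := by
    rw [← Real.rpow_add' hx (by linarith)]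
    ring_nf
  have hk1 : (k : ℝ) ^ ((r - p) / p) * (k : ℝ) ^ (1 - r / p) = 1 := by
    rw [← Real.rpow_add hk0, sub_div, div_self hp.ne', show r / p - 1 + (1 - r / p) = 0 by ring,
      Real.rpow_zero]
  calc x ^ r * logTail p r k = x ^ p * (x ^ (r - p) * Log k ^ r) * (k : ℝ) ^ (1 - r / p) := by
        rw [logTail, hsplit]
        ring
    _ ≤ x ^ p * (k : ℝ) ^ ((r - p) / p) * (k : ℝ) ^ (1 - r / p) := by
        gcongr
        exact (le_div_iff₀ (by positivity)).mp hpow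
    _ = x ^ p := by rw [mul_assoc, hk1, mul_one]

lemma logWeight_mul_le_of_le_truncLevel (k : ℕ) {x : ℝ} (hx : 0 ≤ x)
    (hxk : x ^ r ≤ truncLevel p r k) : logWeight p r k * x ^ r ≤ x ^ p := by
  rcases Nat.eq_zero_or_pos k with rfl | hk
  · simp [logWeight, Real.zero_rpow (div_pos (hp.trans hr) hp).ne', Real.rpow_nonneg hx]
  have hk1 : (1 : ℝ) ≤ k := Nat.one_le_cast.mpr hk
  have hweight : logWeight p r k = logTail p r k / k := by
    rw [logWeight, logTail, Real.rpow_sub (by linarith), Real.rpow_one]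
    field_simp
  calc logWeight p r k * x ^ r = x ^ r * logTail p r k / k := by rw [hweight]; ring
    _ ≤ x ^ r * logTail p r k := div_le_self (mul_nonneg (by positivity) (logTail_nonneg p r k)) hk1
    _ ≤ x ^ p := rpow_mul_logTail_le_of_le_truncLevel hp hr k hx hxk

lemma truncTerm_le (k : ℕ) {x : ℝ} (hx : 0 ≤ x) : truncTerm p r x k ≤ x ^ p := by
  rw [truncTerm]
  split_ifs with hxk
  · exact logWeight_mul_le_of_le_truncLevel hp hr k hx hxk
  · positivity

end Truncation

lemma hasDerivAt_log_rpow_mul_rpow (r s : ℝ) {t : ℝ} (ht : 1 < t) :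
    HasDerivAt (fun u : ℝ => Real.log u ^ r * u ^ (1 - s))
      (-(t ^ (-s) * Real.log t ^ (r - 1) * ((s - 1) * Real.log t - r))) t := by
  have ht0 : (0 : ℝ) < t := by linarith
  have hlog : 0 < Real.log t := Real.log_pos ht
  have hlogr : HasDerivAt (fun u : ℝ => Real.log u ^ r) (t⁻¹ * r * Real.log t ^ (r - 1)) t :=
    (Real.hasDerivAt_log ht0.ne').rpow_const (Or.inl hlog.ne')
  have hpow : HasDerivAt (fun u : ℝ => u ^ (1 - s)) ((1 - s) * t ^ (1 - s - 1)) t :=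
    Real.hasDerivAt_rpow_const (Or.inl ht0.ne')
  refine (hlogr.mul hpow).congr_deriv ?_
  have hlog_rpow : Real.log t ^ r = Real.log t ^ (r - 1) * Real.log t := by
    rw [← Real.rpow_add_one hlog.ne', sub_add_cancel]
  rw [show 1 - s - 1 = -s by ring, show 1 - s = -s + 1 by ring, Real.rpow_add_one ht0.ne',
    hlog_rpow]
  field_simp
  ring

lemma mul_log_rpow_mul_rpow_le_sub {r s : ℝ} (hr : 0 < r) (hs : 1 < s) {t : ℝ} (ht : 1 < t)
    (hlog : 2 * r ≤ (s - 1) * Real.log t) :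
    (s - 1) / 2 * 2 ^ (-s) * (Real.log t ^ r * t ^ (-s)) ≤
      Real.log t ^ r * t ^ (1 - s) - Real.log (t + 1) ^ r * (t + 1) ^ (1 - s) := by
  obtain ⟨c, ⟨htc, hct⟩, hslope⟩ := exists_hasDerivAt_eq_slope _ _ (lt_add_one t)
    (fun u hu => (hasDerivAt_log_rpow_mul_rpow r s (ht.trans_le hu.1)).continuousAt
      |>.continuousWithinAt)
    (fun u hu => hasDerivAt_log_rpow_mul_rpow r s (ht.trans hu.1))
  have hc : 1 < c := ht.trans htc
  have hlogc : 0 < Real.log c := Real.log_pos hc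
  have hlogtc : Real.log t ≤ Real.log c := Real.log_le_log (by linarith) htc.le
  have hdiff : Real.log t ^ r * t ^ (1 - s) - Real.log (t + 1) ^ r * (t + 1) ^ (1 - s) =
      c ^ (-s) * (Real.log c ^ (r - 1) * ((s - 1) * Real.log c - r)) := by
    rw [add_sub_cancel_left, div_one] at hslope
    linarith
  have hpow : 2 ^ (-s) * t ^ (-s) ≤ c ^ (-s) := by
    rw [← Real.mul_rpow (by norm_num) (by linarith)]
    exact Real.rpow_le_rpow_of_nonpos (by linarith) (by linarith) (by linarith)
  have hlogpow : (s - 1) / 2 * Real.log t ^ r ≤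
      Real.log c ^ (r - 1) * ((s - 1) * Real.log c - r) := by
    have e : Real.log c ^ r = Real.log c ^ (r - 1) * Real.log c := by
      rw [← Real.rpow_add_one hlogc.ne', sub_add_cancel]
    calc (s - 1) / 2 * Real.log t ^ r ≤ (s - 1) / 2 * Real.log c ^ r :=
          mul_le_mul_of_nonneg_left (Real.rpow_le_rpow (Real.log_pos ht).le hlogtc hr.le)
            (by linarith)
      _ = Real.log c ^ (r - 1) * ((s - 1) / 2 * Real.log c) := by rw [e]; ring
      _ ≤ Real.log c ^ (r - 1) * ((s - 1) * Real.log c - r) := by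
          gcongr
          nlinarith
  rw [hdiff]
  calc (s - 1) / 2 * 2 ^ (-s) * (Real.log t ^ r * t ^ (-s))
      = 2 ^ (-s) * t ^ (-s) * ((s - 1) / 2 * Real.log t ^ r) := by ring
    _ ≤ c ^ (-s) * (Real.log c ^ (r - 1) * ((s - 1) * Real.log c - r)) :=
        mul_le_mul hpow hlogpow
          (mul_nonneg (by linarith) (Real.rpow_nonneg (Real.log_pos ht).le _))
          (Real.rpow_nonneg (by linarith) _)

lemma eventually_mul_logWeight_le_logTail_sub {p r : ℝ} (hp : 0 < p) (hr : p < r) :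
    ∀ᶠ k : ℕ in atTop, (r / p - 1) / 2 * 2 ^ (-(r / p)) * logWeight p r k ≤
      logTail p r k - logTail p r (k + 1) := by
  have hs : 1 < r / p := (one_lt_div hp).mpr hr
  filter_upwards [eventually_ge_atTop 3,
    (Real.tendsto_log_atTop.comp tendsto_natCast_atTop_atTop).eventually_ge_atTop
      (2 * r / (r / p - 1))] with k hk3 hlog
  have hk3 : (3 : ℝ) ≤ k := by exact_mod_cast hk3
  have he : Real.exp 1 ≤ k := by linarith [Real.exp_one_lt_d9]
  rw [logWeight, logTail, logTail, Log_of_exp_one_le he, Nat.cast_succ,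
    Log_of_exp_one_le (by linarith), div_eq_mul_inv (Real.log _ ^ r),
    ← Real.rpow_neg (by linarith)]
  have hlog' := (div_le_iff₀ (by linarith)).mp hlog
  exact mul_log_rpow_mul_rpow_le_sub (hp.trans hr) hs (by linarith)
    (by simpa [mul_comm] using hlog')

lemma sum_Ico_le_of_le_sub {u G : ℕ → ℝ} {m n : ℕ}
    (hu : ∀ k ∈ Ico m n, u k ≤ G k - G (k + 1)) (hG : ∀ k, 0 ≤ G k) :
    ∑ k ∈ Ico m n, u k ≤ G m := by
  rcases le_or_gt m n with hmn | hnm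
  · have htel := sum_Ico_sub (fun k => -G k) hmn
    simp only [neg_sub_neg] at htel
    linarith [sum_le_sum hu, hG n]
  · simpa [Ico_eq_empty_of_le hnm.le] using hG m

section Telescoping

variable {p r : ℝ} (hp : 0 < p) (hr : p < r)
include hp hr

lemma sum_Ico_truncTerm_le {a : ℝ} (ha : 0 < a) {k₀ : ℕ}
    (hdec : ∀ k ≥ k₀, a * logWeight p r k ≤ logTail p r k - logTail p r (k + 1))
    {x : ℝ} (hx : 0 ≤ x) (n : ℕ) :
    ∑ k ∈ Ico k₀ n, truncTerm p r x k ≤ a⁻¹ * x ^ p := by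
  set G : ℕ → ℝ := fun k => min (x ^ r * logTail p r k) (x ^ p)
  have hG : ∀ k, 0 ≤ G k := fun k =>
    le_min (mul_nonneg (by positivity) (logTail_nonneg p r k)) (by positivity)
  have hstep : ∀ k ∈ Ico k₀ n, a * truncTerm p r x k ≤ G k - G (k + 1) := by
    intro k hk
    have hdeck := hdec k (mem_Ico.mp hk).1
    have hanti : logTail p r (k + 1) ≤ logTail p r k := by
      nlinarith [logWeight_nonneg p r k]
    rw [truncTerm]
    split_ifs with hxk
    · have hGk : G k = x ^ r * logTail p r k :=
        min_eq_left (rpow_mul_logTail_le_of_le_truncLevel hp hr k hx hxk)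
      calc a * (logWeight p r k * x ^ r) = x ^ r * (a * logWeight p r k) := by ring
        _ ≤ x ^ r * (logTail p r k - logTail p r (k + 1)) := by gcongr
        _ ≤ G k - G (k + 1) := by
            rw [hGk]
            linarith [min_le_left (x ^ r * logTail p r (k + 1)) (x ^ p)]
    · have : G (k + 1) ≤ G k := min_le_min_right _ (by gcongr)
      simpa using this
  rw [le_inv_mul_iff₀ ha, mul_sum]
  exact (sum_Ico_le_of_le_sub hstep hG).trans (min_le_right _ _)

lemma exists_sum_range_truncTerm_le :
    ∃ C > 0, ∀ x : ℝ, 0 ≤ x → ∀ n : ℕ, ∑ k ∈ range n, truncTerm p r x k ≤ C * x ^ p := by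
  set a := (r / p - 1) / 2 * 2 ^ (-(r / p))
  have ha : 0 < a := mul_pos (by linarith [(one_lt_div hp).mpr hr]) (by positivity)
  obtain ⟨k₀, hk₀⟩ := eventually_atTop.mp (eventually_mul_logWeight_le_logTail_sub hp hr)
  refine ⟨k₀ + a⁻¹, by positivity, fun x hx n => ?_⟩
  have hhead : ∑ k ∈ range k₀, truncTerm p r x k ≤ k₀ * x ^ p := by
    simpa using sum_le_card_nsmul (range k₀) _ (x ^ p) fun k _ => truncTerm_le hp hr k hx
  calc ∑ k ∈ range n, truncTerm p r x k ≤ ∑ k ∈ range (max n k₀), truncTerm p r x k :=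
        sum_le_sum_of_subset_of_nonneg (range_subset_range.mpr (le_max_left _ _))
          fun k _ _ => truncTerm_nonneg p r k hx
    _ = ∑ k ∈ range k₀, truncTerm p r x k + ∑ k ∈ Ico k₀ (max n k₀), truncTerm p r x k :=
        (sum_range_add_sum_Ico _ (le_max_right _ _)).symm
    _ ≤ k₀ * x ^ p + a⁻¹ * x ^ p := add_le_add hhead (sum_Ico_truncTerm_le hp hr ha hk₀ hx _)
    _ = (k₀ + a⁻¹) * x ^ p := by ring

end Telescoping

lemma tsum_ofReal_integral_le_of_forall_sum_le {Ω : Type*} [MeasurableSpace Ω]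
    {μ : Measure Ω} {f : ℕ → Ω → ℝ} {g : Ω → ℝ} (hf : ∀ k, AEStronglyMeasurable (f k) μ)
    (hf0 : ∀ k ω, 0 ≤ f k ω) (hg : Integrable g μ) (hfg : ∀ n ω, ∑ k ∈ range n, f k ω ≤ g ω) :
    ∑' k, ENNReal.ofReal (∫ ω, f k ω ∂μ) ≤ ENNReal.ofReal (∫ ω, g ω ∂μ) := by
  have hfi : ∀ k, Integrable (f k) μ := fun k =>
    hg.mono' (hf k) (Eventually.of_forall fun ω => by
      rw [Real.norm_of_nonneg (hf0 k ω)]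
      exact (single_le_sum (fun j _ => hf0 j ω) (self_mem_range_succ k)).trans (hfg (k + 1) ω))
  have hg0 : 0 ≤ᵐ[μ] g := Eventually.of_forall fun ω => by simpa using hfg 0 ω
  calc ∑' k, ENNReal.ofReal (∫ ω, f k ω ∂μ) = ∑' k, ∫⁻ ω, ENNReal.ofReal (f k ω) ∂μ :=
        tsum_congr fun k =>
          ofReal_integral_eq_lintegral_ofReal (hfi k) (Eventually.of_forall (hf0 k))
    _ = ∫⁻ ω, ∑' k, ENNReal.ofReal (f k ω) ∂μ :=
        (lintegral_tsum fun k => (hf k).aemeasurable.ennreal_ofReal).symm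
    _ ≤ ∫⁻ ω, ENNReal.ofReal (g ω) ∂μ :=
        lintegral_mono fun ω => ENNReal.tsum_le_of_sum_range_le fun n => by
          rw [← ENNReal.ofReal_sum_of_nonneg fun k _ => hf0 k ω]
          exact ENNReal.ofReal_le_ofReal (hfg n ω)
    _ = ENNReal.ofReal (∫ ω, g ω ∂μ) := (ofReal_integral_eq_lintegral_ofReal hg hg0).symm

theorem stmt_10_general (p r : ℝ) (hp0 : 0 < p) (hr : p < r) :
    ∃ C : ℝ, 0 < C ∧
      ∀ (Ω : Type) [MeasurableSpace Ω] (μ : Measure Ω) [IsProbabilityMeasure μ]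
        (X : Ω → ℝ), Measurable X → Integrable (fun ω => |X ω| ^ p) μ →
        ∑' k : ℕ, ENNReal.ofReal (Log k ^ r / (k : ℝ) ^ (r / p) *
            ∫ ω in {ω | |X ω| ^ r ≤ (k : ℝ) ^ (r / p) / Log k ^ (r ^ 2 / (r - p))},
              |X ω| ^ r ∂μ)
          ≤ ENNReal.ofReal (C * ∫ ω, |X ω| ^ p ∂μ) := by
  obtain ⟨C, hC, hsum⟩ := exists_sum_range_truncTerm_le hp0 hr
  refine ⟨C, hC, fun Ω _ μ _ X hX hint => ?_⟩
  have hXr : Measurable fun ω => |X ω| ^ r := by fun_prop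
  have hA : ∀ k, MeasurableSet {ω | |X ω| ^ r ≤ truncLevel p r k} := fun k =>
    measurableSet_le hXr measurable_const
  let f : ℕ → Ω → ℝ := fun k =>
    {ω | |X ω| ^ r ≤ truncLevel p r k}.indicator fun ω => logWeight p r k * |X ω| ^ r
  have hf : ∀ n ω, ∑ k ∈ range n, f k ω ≤ C * |X ω| ^ p := fun n ω => by
    simpa only [f, truncTerm, Set.indicator_apply, Set.mem_ofPred_eq]
      using hsum _ (abs_nonneg (X ω)) n
  have key := tsum_ofReal_integral_le_of_forall_sum_le
    (fun k => ((hXr.const_mul _).indicator (hA k)).aestronglyMeasurable)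
    (fun k => Set.indicator_nonneg fun ω _ => mul_nonneg (logWeight_nonneg p r k) (by positivity))
    (hint.const_mul C) hf
  simp only [integral_indicator (hA _), integral_const_mul] at key
  exact key

theorem stmt_10 (p r : ℝ) (hp0 : 0 < p) (hp2 : p < 2) (hr : p < r) :
    ∃ C : ℝ, 0 < C ∧
      ∀ (Ω : Type) [MeasurableSpace Ω] (μ : Measure Ω) [IsProbabilityMeasure μ]
        (X : Ω → ℝ), Measurable X → Integrable (fun ω => |X ω| ^ p) μ →
        ∑' k : ℕ, ENNReal.ofReal (Log k ^ r / (k : ℝ) ^ (r / p) *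
            ∫ ω in {ω | |X ω| ^ r ≤ (k : ℝ) ^ (r / p) / Log k ^ (r ^ 2 / (r - p))},
              |X ω| ^ r ∂μ)
          ≤ ENNReal.ofReal (C * ∫ ω, |X ω| ^ p ∂μ) :=
  stmt_10_general p r hp0 hr
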